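/- For every k ≥ 1, the map φ: MS⁺(k) → CoEnd(S¹)(k) = Map(S¹,(S¹)^k) defined by φ(x,f) = c_x ∘ f is a topological embedding. In particular, if x, y ∈ F(k) and f, g ∈ Mon⁺(I,∂I) satisfy c_x ∘ f = c_y ∘ g as maps S¹ → (S¹)^k, then f = g and x = y (i.e., c_x^j = c_y^j for all j). -/

import Mathlib

open MeasureTheory Set
open scoped ENNReal

noncomputable section

abbrev Circle1 := AddCircle (1 : ℝ)

instance : Fact ((0:ℝ) < 1) := ⟨one_pos⟩

/-- The closed arc which is the image of `[a,b]` in the circle. -/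
def IsClosedArc (A : Set Circle1) : Prop :=
  ∃ a b : ℝ, a < b ∧ b ≤ a + 1 ∧ A = (fun s : ℝ => (s : Circle1)) '' Set.Icc a b

def IsFiniteUnionOfArcs (A : Set Circle1) : Prop :=
  ∃ (n : ℕ) (f : Fin n → Set Circle1), (∀ i, IsClosedArc (f i)) ∧ A = ⋃ i, f i

/-- `(z₁; z₂; z₃; z₄)` is a cyclically ordered 4-tuple in the circle. -/
def CyclicallyOrdered4 (z₁ z₂ z₃ z₄ : Circle1) : Prop :=
  ∃ a b c d : ℝ, a < b ∧ b < c ∧ c < d ∧ d < a + 1 ∧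
    (a : Circle1) = z₁ ∧ (b : Circle1) = z₂ ∧ (c : Circle1) = z₃ ∧ (d : Circle1) = z₄

/-- The space `F(k)` of normalized cacti with `k` lobes. -/
structure CactusPartition (k : ℕ) where
  part : Fin k → Set Circle1
  closed' : ∀ j, IsClosed (part j)
  nonempty' : ∀ j, (part j).Nonempty
  arcs' : ∀ j, IsFiniteUnionOfArcs (part j)
  covers : ⋃ j, part j = Set.univ
  disjoint_interiors : ∀ i j, i ≠ j → interior (part i) ∩ interior (part j) = ∅
  measure_part : ∀ j, volume (part j) = ENNReal.ofReal (1 / k)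
  treelike : ¬ ∃ (i j : Fin k) (z₁ z₂ z₃ z₄ : Circle1), i ≠ j ∧
      z₁ ∈ interior (part j) ∧ z₃ ∈ interior (part j) ∧
      z₂ ∈ interior (part i) ∧ z₄ ∈ interior (part i) ∧
      CyclicallyOrdered4 z₁ z₂ z₃ z₄

/-- The image of `[0,t]` in the circle. -/
def arcTo (t : ℝ) : Set Circle1 := (fun s : ℝ => (s : Circle1)) '' Set.Icc 0 t

/-- The canonical representative in `[0,1)` of a point of the circle. -/
def rep01 (z : Circle1) : ℝ := ((AddCircle.equivIco 1 0) z : ℝ)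

lemma rep01_mem (z : Circle1) : rep01 z ∈ Set.Icc (0:ℝ) 1 := by
  have h := ((AddCircle.equivIco 1 0) z).2
  exact ⟨h.1, by have := h.2; simp only [zero_add] at this; exact this.le⟩

/-- The real-valued lift `c̃_x^j(t) = k · μ(I_j(x) ∩ [0,t])` of the `j`-th coordinate
of the cactus map. -/
def cactusCoord {k : ℕ} (x : CactusPartition k) (j : Fin k) (t : ℝ) : ℝ :=
  (k : ℝ) * (volume (x.part j ∩ arcTo t)).toReal

/-- The cactus map `c_x : S¹ → (S¹)^k`. -/
def cactusMap {k : ℕ} (x : CactusPartition k) : Circle1 → Fin k → Circle1 :=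
  fun z j => ((cactusCoord x j (rep01 z) : ℝ) : Circle1)

/-- The metric `d(x,y) = 1 - Σ_j μ(I_j(x) ∩ I_j(y))` on `F(k)`. -/
def cactDist {k : ℕ} (x y : CactusPartition k) : ℝ :=
  1 - ∑ j, (volume (x.part j ∩ y.part j)).toReal

/-- `Mon⁺(I, ∂I)`: continuous strictly increasing self-maps of `[0,1]` fixing `0`
and `1`, regarded as basepoint-preserving self-maps of the circle. -/
structure MonPlus where
  toFun : Set.Icc (0:ℝ) 1 → Set.Icc (0:ℝ) 1
  continuous_toFun : Continuous toFun
  strictMono_toFun : StrictMono toFun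
  map_zero : toFun ⟨0, Set.left_mem_Icc.mpr zero_le_one⟩ = ⟨0, Set.left_mem_Icc.mpr zero_le_one⟩
  map_one : toFun ⟨1, Set.right_mem_Icc.mpr zero_le_one⟩ = ⟨1, Set.right_mem_Icc.mpr zero_le_one⟩

/-- The self-map of the circle induced by an element of `Mon⁺(I, ∂I)`. -/
def MonPlus.circleMap (f : MonPlus) (z : Circle1) : Circle1 :=
  ((f.toFun ⟨rep01 z, rep01_mem z⟩ : ℝ) : Circle1)

/-- `φ(x, f) = c_x ∘ f : S¹ → (S¹)^k`. -/
def phiMap {k : ℕ} (x : CactusPartition k) (f : MonPlus) : Circle1 → Fin k → Circle1 :=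
  fun z => cactusMap x (f.circleMap z)

/-- Partial composition `f ∘_i g` of the coendomorphism operad of the circle. -/
def coendComp {k j : ℕ} (hj : 1 ≤ j) (f : Circle1 → Fin k → Circle1) (i : Fin k)
    (g : Circle1 → Fin j → Circle1) : Circle1 → Fin (k + j - 1) → Circle1 := fun z s =>
  if h1 : (s : ℕ) < (i : ℕ) then f z ⟨s, Nat.lt_trans h1 i.isLt⟩
  else if h2 : (s : ℕ) < (i : ℕ) + j then g (f z i) ⟨(s : ℕ) - (i : ℕ), by omega⟩
  else f z ⟨(s : ℕ) - j + 1, by have := s.isLt; have := i.isLt; omega⟩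

end

/-!
The `j`-th coordinate of `c_x ∘ f` has the continuous real lift `t ↦ k μ(I_j(x) ∩ [0, f t])`,
which starts at `0`. A continuous lift starting at `0` whose image in the circle stays
`δ`-close to `0`, for `δ ≤ 1/2`, stays `δ`-close to `0` in `ℝ`; so uniform `δ`-closeness of
`c_x ∘ f` and `c_y ∘ g` makes the lifts `δ`-close. The lifts add up to `k f(t)`, hence
`|f - g| < δ`, and then the distribution functions `t ↦ μ(I_j ∩ [0, t])` of `x` and `y` are
`2δ`-close. As `I_j(x)` is a union of finitely many arcs, this bounds `μ(I_j(x) \ I_j(y))` and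
hence `d(x, y) = ∑ⱼ μ(I_j(x) \ I_j(y))` by a multiple of `δ`. The converse estimate is the
Lipschitz property of distribution functions. Injectivity follows from these estimates, since a
finite union of nondegenerate arcs is the closure of its interior, so `d(x, y) = 0` forces
`x = y`.
-/

noncomputable section

def circleArc (a b : ℝ) : Set Circle1 := (fun s : ℝ => (s : Circle1)) '' Icc a b

lemma arcTo_eq_circleArc (t : ℝ) : arcTo t = circleArc 0 t := rfl

lemma circleArc_sub_intCast (a b : ℝ) (n : ℤ) : circleArc (a - n) (b - n) = circleArc a b := by
  rw [circleArc, ← image_sub_const_Icc, ← image_comp]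
  exact image_congr fun u _ => by simp

lemma circleArc_union {a b c : ℝ} (hab : a ≤ b) (hbc : b ≤ c) :
    circleArc a b ∪ circleArc b c = circleArc a c := by
  rw [circleArc, circleArc, ← image_union, Icc_union_Icc_eq_Icc hab hbc, circleArc]

lemma isCompact_circleArc (a b : ℝ) : IsCompact (circleArc a b) :=
  isCompact_Icc.image (AddCircle.continuous_mk' 1)

lemma measurableSet_circleArc (a b : ℝ) : MeasurableSet (circleArc a b) :=
  (isCompact_circleArc a b).isClosed.measurableSet

lemma dist_coe_le_abs_sub (u v : ℝ) : dist (u : Circle1) (v : Circle1) ≤ |u - v| := by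
  rw [dist_eq_norm, ← AddCircle.coe_sub]
  exact QuotientAddGroup.norm_mk_le_norm (S := AddSubgroup.zmultiples (1 : ℝ))

lemma circleArc_eq_closedBall (a b : ℝ) :
    circleArc a b = Metric.closedBall (((a + b) / 2 : ℝ) : Circle1) ((b - a) / 2) := by
  ext z
  rw [Metric.mem_closedBall]
  constructor
  · rintro ⟨s, hs, rfl⟩
    refine (dist_coe_le_abs_sub _ _).trans (abs_le.2 ⟨?_, ?_⟩) <;> linarith [hs.1, hs.2]
  · obtain ⟨x, rfl⟩ := QuotientAddGroup.mk_surjective z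
    intro hx
    rw [dist_eq_norm, ← QuotientAddGroup.mk_sub, UnitAddCircle.norm_eq, abs_le] at hx
    exact ⟨x - round (x - (a + b) / 2), ⟨by linarith, by linarith⟩, by simp⟩

lemma volume_circleArc {a b : ℝ} (hb : b ≤ a + 1) :
    volume (circleArc a b) = ENNReal.ofReal (b - a) := by
  rw [circleArc_eq_closedBall, AddCircle.volume_closedBall, min_eq_right (by linarith)]
  ring_nf

lemma exists_circleArc_eq_union {a b : ℝ} (hab : a ≤ b) (hb : b ≤ a + 1) :
    ∃ a₁ b₁ a₂ b₂ : ℝ, (0 ≤ a₁ ∧ a₁ ≤ b₁ ∧ b₁ ≤ 1) ∧ (0 ≤ a₂ ∧ a₂ ≤ b₂ ∧ b₂ ≤ 1) ∧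
      circleArc a b = circleArc a₁ b₁ ∪ circleArc a₂ b₂ := by
  have hfl := Int.floor_le a
  have hlt := Int.lt_floor_add_one a
  rw [← circleArc_sub_intCast a b ⌊a⌋]
  rcases le_or_gt (b - ⌊a⌋) 1 with hb1 | hb1
  · exact ⟨_, _, _, _, ⟨by linarith, by linarith, hb1⟩, ⟨by linarith, by linarith, hb1⟩,
      (union_self _).symm⟩
  · refine ⟨a - ⌊a⌋, 1, 0, b - ⌊a⌋ - 1, ⟨by linarith, by linarith, le_rfl⟩,
      ⟨le_rfl, by linarith, by linarith⟩, ?_⟩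
    have hshift := circleArc_sub_intCast 1 (b - ⌊a⌋) 1
    rw [Int.cast_one, sub_self] at hshift
    rw [hshift, circleArc_union (by linarith) hb1.le]

def arcCdf (S : Set Circle1) (t : ℝ) : ℝ := (volume (S ∩ arcTo t)).toReal

lemma arcCdf_zero (S : Set Circle1) : arcCdf S 0 = 0 := by
  have : volume (arcTo 0) = 0 := by
    simpa [arcTo_eq_circleArc] using volume_circleArc (a := 0) (b := 0) (by norm_num)
  simp [arcCdf, measure_mono_null inter_subset_right this]

lemma arcCdf_one (S : Set Circle1) : arcCdf S 1 = (volume S).toReal := by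
  have : arcTo 1 = univ := by
    simpa [arcTo] using AddCircle.coe_image_Icc_eq (1 : ℝ) 0
  rw [arcCdf, this, inter_univ]

lemma arcCdf_sub_arcCdf {S : Set Circle1} (hS : MeasurableSet S) {a b : ℝ} (ha : 0 ≤ a)
    (hab : a ≤ b) (hb : b ≤ 1) :
    arcCdf S b - arcCdf S a = (volume (S ∩ circleArc a b)).toReal := by
  have hunion : arcTo a ∪ circleArc a b = arcTo b := circleArc_union ha hab
  -- the two arcs have lengths adding up to that of their union, so they overlap in a null set
  have hnull : volume (arcTo a ∩ circleArc a b) = 0 := by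
    have h := measure_union_add_inter (μ := volume) (arcTo a) (measurableSet_circleArc a b)
    rw [hunion, arcTo_eq_circleArc, arcTo_eq_circleArc, volume_circleArc (by linarith),
      volume_circleArc (by linarith), volume_circleArc (by linarith),
      sub_zero, sub_zero, ← ENNReal.ofReal_add ha (by linarith), add_sub_cancel] at h
    rw [arcTo_eq_circleArc]
    exact (ENNReal.add_right_inj ENNReal.ofReal_ne_top).1 (h.trans (add_zero _).symm)
  rw [arcCdf, arcCdf, ← hunion, inter_union_distrib_left,
    measure_union₀ (hS.inter (measurableSet_circleArc a b)).nullMeasurableSet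
      (measure_mono_null (inter_subset_inter inter_subset_right inter_subset_right) hnull),
    ENNReal.toReal_add (measure_ne_top _ _) (measure_ne_top _ _), add_sub_cancel_left]

lemma abs_arcCdf_sub_le {S : Set Circle1} (hS : MeasurableSet S) {a b : ℝ}
    (ha : a ∈ Icc (0 : ℝ) 1) (hb : b ∈ Icc (0 : ℝ) 1) : |arcCdf S b - arcCdf S a| ≤ |b - a| := by
  wlog hab : a ≤ b generalizing a b
  · rw [abs_sub_comm, abs_sub_comm b]; exact this hb ha (le_of_not_ge hab)
  have hvol := volume_circleArc (a := a) (b := b) (by linarith [ha.1, hb.2])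
  rw [arcCdf_sub_arcCdf hS ha.1 hab hb.2, abs_of_nonneg ENNReal.toReal_nonneg,
    abs_of_nonneg (sub_nonneg.2 hab), ← ENNReal.toReal_ofReal (sub_nonneg.2 hab), ← hvol]
  exact ENNReal.toReal_mono (measure_ne_top _ _) (measure_mono inter_subset_right)

lemma continuousOn_arcCdf {S : Set Circle1} (hS : MeasurableSet S) :
    ContinuousOn (arcCdf S) (Icc 0 1) :=
  (LipschitzOnWith.of_dist_le_mul (K := 1) fun a ha b hb => by
    simpa [Real.dist_eq] using abs_arcCdf_sub_le hS hb ha).continuousOn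

lemma volume_circleArc_diff_le {S T : Set Circle1} (hS : MeasurableSet S) (hT : MeasurableSet T)
    {η : ℝ} (hη : ∀ s ∈ Icc (0 : ℝ) 1, |arcCdf S s - arcCdf T s| ≤ η) {a b : ℝ} (ha : 0 ≤ a)
    (hab : a ≤ b) (hb : b ≤ 1) (hAS : circleArc a b ⊆ S) :
    (volume (circleArc a b \ T)).toReal ≤ 2 * η := by
  have hsplit := congrArg ENNReal.toReal (measure_inter_add_sdiff (μ := volume) (circleArc a b) hT)
  rw [ENNReal.toReal_add (measure_ne_top _ _) (measure_ne_top _ _), inter_comm] at hsplit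
  have hSab := arcCdf_sub_arcCdf hS ha hab hb
  rw [inter_eq_right.2 hAS] at hSab
  have hTab := arcCdf_sub_arcCdf hT ha hab hb
  have hηa := abs_le.1 (hη a ⟨ha, hab.trans hb⟩)
  have hηb := abs_le.1 (hη b ⟨ha.trans hab, hb⟩)
  linarith [hηa.1, hηb.2]

lemma IsClosedArc.volume_diff_le {S T A : Set Circle1} (hA : IsClosedArc A) (hAS : A ⊆ S)
    (hS : MeasurableSet S) (hT : MeasurableSet T) {η : ℝ}
    (hη : ∀ s ∈ Icc (0 : ℝ) 1, |arcCdf S s - arcCdf T s| ≤ η) :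
    (volume (A \ T)).toReal ≤ 4 * η := by
  obtain ⟨a, b, hab, hb, rfl : A = circleArc a b⟩ := hA
  obtain ⟨a₁, b₁, a₂, b₂, h₁, h₂, hsplit⟩ := exists_circleArc_eq_union hab.le hb
  rw [hsplit, union_subset_iff] at hAS
  have hle₁ := volume_circleArc_diff_le hS hT hη h₁.1 h₁.2.1 h₁.2.2 hAS.1
  have hle₂ := volume_circleArc_diff_le hS hT hη h₂.1 h₂.2.1 h₂.2.2 hAS.2
  calc (volume (circleArc a b \ T)).toReal
      ≤ (volume (circleArc a₁ b₁ \ T)).toReal + (volume (circleArc a₂ b₂ \ T)).toReal := by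
        rw [hsplit, union_sdiff_distrib,
          ← ENNReal.toReal_add (measure_ne_top _ _) (measure_ne_top _ _)]
        exact ENNReal.toReal_mono (by simp [measure_ne_top]) (measure_union_le _ _)
    _ ≤ 4 * η := by linarith

namespace IsFiniteUnionOfArcs

variable {S : Set Circle1}

lemma measurableSet (hS : IsFiniteUnionOfArcs S) : MeasurableSet S := by
  obtain ⟨n, A, hA, rfl⟩ := hS
  exact MeasurableSet.iUnion fun i => by
    obtain ⟨a, b, -, -, h⟩ := hA i
    exact h ▸ measurableSet_circleArc a b

lemma exists_volume_diff_le (hS : IsFiniteUnionOfArcs S) :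
    ∃ N : ℕ, ∀ (T : Set Circle1) (η : ℝ), MeasurableSet T →
      (∀ s ∈ Icc (0 : ℝ) 1, |arcCdf S s - arcCdf T s| ≤ η) →
      (volume (S \ T)).toReal ≤ N * (4 * η) := by
  have hSm := hS.measurableSet
  obtain ⟨n, A, hA, rfl⟩ := hS
  refine ⟨n, fun T η hT hη => ?_⟩
  calc (volume ((⋃ i, A i) \ T)).toReal ≤ ∑ i, (volume (A i \ T)).toReal := by
        rw [iUnion_sdiff, ← ENNReal.toReal_sum fun i _ => measure_ne_top _ _]
        exact ENNReal.toReal_mono (by simp [measure_ne_top]) (measure_iUnion_fintype_le _ _)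
    _ ≤ ∑ _i : Fin n, 4 * η := Finset.sum_le_sum fun i _ =>
        (hA i).volume_diff_le (subset_iUnion A i) hSm hT hη
    _ = n * (4 * η) := by simp

lemma subset_closure_interior (hS : IsFiniteUnionOfArcs S) : S ⊆ closure (interior S) := by
  obtain ⟨n, A, hA, rfl⟩ := hS
  refine iUnion_subset fun i => ?_
  obtain ⟨a, b, hab, -, hAi⟩ := hA i
  have hopen : (fun s : ℝ => (s : Circle1)) '' Ioo a b ⊆ interior (⋃ i, A i) :=
    interior_maximal ((image_mono Ioo_subset_Icc_self).trans (hAi ▸ subset_iUnion A i))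
      (QuotientAddGroup.isOpenMap_coe _ isOpen_Ioo)
  calc A i = (fun s : ℝ => (s : Circle1)) '' closure (Ioo a b) := by
        rw [closure_Ioo hab.ne, hAi]
    _ ⊆ closure ((fun s : ℝ => (s : Circle1)) '' Ioo a b) :=
        image_closure_subset_closure_image (AddCircle.continuous_mk' 1)
    _ ⊆ closure (interior (⋃ i, A i)) := closure_mono hopen

end IsFiniteUnionOfArcs

lemma subset_of_measure_diff_eq_zero {X : Type*} [TopologicalSpace X] [MeasurableSpace X]
    {μ : Measure X} [μ.IsOpenPosMeasure] {A B : Set X} (hA : A ⊆ closure (interior A))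
    (hB : IsClosed B) (h : μ (A \ B) = 0) : A ⊆ B := by
  have hint : interior A ⊆ B := by
    by_contra hne
    obtain ⟨u, huA, huB⟩ := not_subset.1 hne
    refine ((isOpen_interior.inter hB.isOpen_compl).measure_pos μ ⟨u, huA, huB⟩).ne' ?_
    exact measure_mono_null (inter_subset_inter_left _ interior_subset) h
  exact hA.trans (closure_minimal hint hB)

lemma sum_measure_inter_eq {X ι : Type*} [MeasurableSpace X] {μ : Measure X} [IsFiniteMeasure μ]
    [Fintype ι] {P : ι → Set X} (hcover : ⋃ i, P i = univ) (hsum : ∑ i, μ (P i) = μ univ)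
    {A : Set X} (hA : MeasurableSet A) : ∑ i, μ (P i ∩ A) = μ A := by
  -- subadditivity gives `≥` both for `A` and for `Aᶜ`, and the two sums add up to `μ univ`
  have cover_le : ∀ B : Set X, μ B ≤ ∑ i, μ (P i ∩ B) := fun B => by
    simpa [← iUnion_inter, hcover] using measure_iUnion_fintype_le μ fun i => P i ∩ B
  have hsplit : ∑ i, μ (P i ∩ A) + ∑ i, μ (P i ∩ Aᶜ) = μ A + μ Aᶜ := by
    simp_rw [← sdiff_eq, ← Finset.sum_add_distrib, measure_inter_add_sdiff _ hA, hsum,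
      measure_add_measure_compl hA]
  refine le_antisymm (ENNReal.le_of_add_le_add_right (measure_ne_top μ Aᶜ) ?_) (cover_le A)
  calc ∑ i, μ (P i ∩ A) + μ Aᶜ ≤ ∑ i, μ (P i ∩ A) + ∑ i, μ (P i ∩ Aᶜ) := by gcongr; exact cover_le _
    _ = μ A + μ Aᶜ := hsplit

namespace CactusPartition

lemma pos {k : ℕ} (x : CactusPartition k) : 0 < k := by
  refine Nat.pos_of_ne_zero fun hk => ?_
  subst hk
  exact empty_ne_univ (by simpa using x.covers)

variable {k : ℕ} (x y : CactusPartition k)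

lemma measurableSet_part (j : Fin k) : MeasurableSet (x.part j) :=
  (x.closed' j).measurableSet

lemma volume_part_toReal (j : Fin k) : (volume (x.part j)).toReal = 1 / k := by
  rw [x.measure_part, ENNReal.toReal_ofReal (by positivity)]

lemma sum_volume_part_inter {A : Set Circle1} (hA : MeasurableSet A) :
    ∑ j, volume (x.part j ∩ A) = volume A := by
  refine sum_measure_inter_eq x.covers ?_ hA
  have hk : (k : ℝ) ≠ 0 := Nat.cast_ne_zero.2 x.pos.ne'
  simp only [x.measure_part, Finset.sum_const, Finset.card_univ, Fintype.card_fin,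
    AddCircle.measure_univ, nsmul_eq_mul, ← ENNReal.ofReal_natCast,
    ← ENNReal.ofReal_mul (Nat.cast_nonneg k), mul_one_div_cancel hk]

lemma sum_arcCdf_part {t : ℝ} (ht : t ∈ Icc (0 : ℝ) 1) : ∑ j, arcCdf (x.part j) t = t := by
  unfold arcCdf
  rw [← ENNReal.toReal_sum fun j _ => measure_ne_top _ _,
    arcTo_eq_circleArc, x.sum_volume_part_inter (measurableSet_circleArc 0 t),
    volume_circleArc (by linarith [ht.2]), sub_zero, ENNReal.toReal_ofReal ht.1]

lemma cactDist_eq_sum_volume_diff :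
    cactDist x y = ∑ j, (volume (x.part j \ y.part j)).toReal := by
  have hk : (k : ℝ) ≠ 0 := Nat.cast_ne_zero.2 x.pos.ne'
  have hdiff : ∀ j, (volume (x.part j \ y.part j)).toReal
      = 1 / k - (volume (x.part j ∩ y.part j)).toReal := fun j => by
    rw [← x.volume_part_toReal j, ← measure_inter_add_sdiff (x.part j) (y.measurableSet_part j),
      ENNReal.toReal_add (measure_ne_top _ _) (measure_ne_top _ _), add_sub_cancel_left]
  simp only [hdiff, Finset.sum_sub_distrib, Finset.sum_const, Finset.card_univ, Fintype.card_fin,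
    nsmul_eq_mul, mul_one_div_cancel hk, cactDist]

lemma cactDist_comm : cactDist x y = cactDist y x := by
  simp only [cactDist, inter_comm]

lemma volume_diff_toReal_le_cactDist (j : Fin k) :
    (volume (x.part j \ y.part j)).toReal ≤ cactDist x y := by
  rw [cactDist_eq_sum_volume_diff]
  exact Finset.single_le_sum (f := fun i => (volume (x.part i \ y.part i)).toReal)
    (fun i _ => ENNReal.toReal_nonneg) (Finset.mem_univ j)

lemma abs_arcCdf_sub_le_cactDist (j : Fin k) (t : ℝ) :
    |arcCdf (y.part j) t - arcCdf (x.part j) t| ≤ cactDist x y := by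
  have arcCdf_le : ∀ S T : Set Circle1, arcCdf T t ≤ arcCdf S t + (volume (T \ S)).toReal :=
    fun S T => by
      rw [arcCdf, arcCdf, ← ENNReal.toReal_add (measure_ne_top _ _) (measure_ne_top _ _)]
      refine ENNReal.toReal_mono (by simp [measure_ne_top]) ((measure_mono ?_).trans
        (measure_union_le _ _))
      intro u hu
      by_cases huS : u ∈ S
      exacts [Or.inl ⟨huS, hu.2⟩, Or.inr ⟨hu.1, huS⟩]
  have hxy := x.volume_diff_toReal_le_cactDist y j
  have hyx := y.volume_diff_toReal_le_cactDist x j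
  rw [cactDist_comm] at hyx
  rw [abs_le]
  constructor <;> linarith [arcCdf_le (x.part j) (y.part j), arcCdf_le (y.part j) (x.part j)]

lemma eq_of_cactDist_le_zero (h : cactDist x y ≤ 0) : x = y := by
  have part_subset : ∀ x y : CactusPartition k, cactDist x y ≤ 0 → ∀ j, x.part j ⊆ y.part j :=
    fun x y h j => by
      refine subset_of_measure_diff_eq_zero (μ := volume) (x.arcs' j).subset_closure_interior
        (y.closed' j) ?_
      have := (x.volume_diff_toReal_le_cactDist y j).trans h
      exact (ENNReal.toReal_eq_zero_iff _).1 (le_antisymm this ENNReal.toReal_nonneg)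
        |>.resolve_right (measure_ne_top _ _)
  have hyx : cactDist y x ≤ 0 := cactDist_comm x y ▸ h
  cases x; cases y
  congr
  exact funext fun j => (part_subset _ _ h j).antisymm (part_subset _ _ hyx j)

end CactusPartition

namespace MonPlus

variable (f : MonPlus)

def extend (t : ℝ) : ℝ := (IccExtend zero_le_one f.toFun t : Icc (0 : ℝ) 1)

lemma extend_of_mem {s : ℝ} (hs : s ∈ Icc (0 : ℝ) 1) : f.extend s = f.toFun ⟨s, hs⟩ := by
  rw [extend, IccExtend_of_mem]

lemma extend_mem (t : ℝ) : f.extend t ∈ Icc (0 : ℝ) 1 := (IccExtend zero_le_one f.toFun t).2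

lemma continuous_extend : Continuous f.extend :=
  continuous_subtype_val.comp f.continuous_toFun.Icc_extend'

lemma extend_zero : f.extend 0 = 0 := by
  rw [extend, IccExtend_left, f.map_zero]

lemma extend_one : f.extend 1 = 1 := by
  rw [extend, IccExtend_right, f.map_one]

lemma surjOn_extend : SurjOn f.extend (Icc 0 1) (Icc 0 1) := by
  have h := intermediate_value_Icc zero_le_one f.continuous_extend.continuousOn
  rwa [extend_zero, extend_one] at h

lemma ext_of_coe {f g : MonPlus} (h : ∀ s, (f.toFun s : ℝ) = g.toFun s) : f = g := by
  obtain ⟨f, _⟩ := f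
  obtain ⟨g, _⟩ := g
  congr
  exact funext fun s => Subtype.ext (h s)

end MonPlus

lemma abs_lt_of_forall_norm_coe_lt {h : ℝ → ℝ} {a b δ : ℝ} (hh : ContinuousOn h (Icc a b))
    (ha : h a = 0) (hδ : δ ≤ 1 / 2) (hnorm : ∀ s ∈ Icc a b, ‖(h s : Circle1)‖ < δ) {s : ℝ}
    (hs : s ∈ Icc a b) : |h s| < δ := by
  have hδ0 : 0 ≤ δ := by simpa [ha] using (hnorm a ⟨le_rfl, hs.1.trans hs.2⟩).le
  -- otherwise `h` passes through `±δ`, whose images in the circle have norm exactly `δ`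
  by_contra! hge
  obtain ⟨u, hu, hhu⟩ : ∃ u ∈ Icc a s, |h u| = δ :=
    intermediate_value_Icc hs.1 (hh.mono (Icc_subset_Icc_right hs.2)).abs ⟨by simpa [ha], hge⟩
  have hnorm_u : ‖(h u : Circle1)‖ = |h u| :=
    (AddCircle.norm_coe_eq_abs_iff 1 one_ne_zero).2 (by rw [hhu]; norm_num; linarith)
  exact (hnorm u ⟨hu.1, hu.2.trans hs.2⟩).ne (hnorm_u.trans hhu)

lemma rep01_coe (u : ℝ) : rep01 (u : Circle1) = Int.fract u := by
  simp [rep01]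

section CactusMap

variable {k : ℕ} (x : CactusPartition k) (j : Fin k)

lemma cactusCoord_eq (t : ℝ) : cactusCoord x j t = k * arcCdf (x.part j) t := rfl

lemma cactusCoord_zero : cactusCoord x j 0 = 0 := by
  rw [cactusCoord_eq, arcCdf_zero, mul_zero]

lemma cactusCoord_one : cactusCoord x j 1 = 1 := by
  rw [cactusCoord_eq, arcCdf_one, x.volume_part_toReal,
    mul_one_div_cancel (Nat.cast_ne_zero.2 x.pos.ne')]

lemma sum_cactusCoord {t : ℝ} (ht : t ∈ Icc (0 : ℝ) 1) : ∑ j, cactusCoord x j t = k * t := by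
  simp only [cactusCoord_eq, ← Finset.mul_sum, x.sum_arcCdf_part ht]

/-- At `s = 1` the left side is computed at the basepoint, where the lift is `0` rather than `1`;
the two agree in the circle. -/
lemma phiMap_coe (f : MonPlus) {s : ℝ} (hs : s ∈ Icc (0 : ℝ) 1) :
    phiMap x f s j = ((cactusCoord x j (f.extend s) : ℝ) : Circle1) := by
  have coe_cactusCoord_one : ((cactusCoord x j 1 : ℝ) : Circle1) = cactusCoord x j 0 := by
    simp [cactusCoord_zero, cactusCoord_one]
  have coe_cactusCoord_fract : ∀ u ∈ Icc (0 : ℝ) 1,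
      ((cactusCoord x j (Int.fract u) : ℝ) : Circle1) = cactusCoord x j u := by
    rintro u ⟨hu0, hu1⟩
    rcases hu1.lt_or_eq with hu1 | rfl
    · rw [Int.fract_eq_self.2 ⟨hu0, hu1⟩]
    · simpa using coe_cactusCoord_one.symm
  simp only [phiMap, cactusMap, MonPlus.circleMap, rep01_coe]
  rw [coe_cactusCoord_fract _ (f.toFun _).2]
  rcases hs.2.lt_or_eq with hs1 | rfl
  · simp only [Int.fract_eq_self.2 ⟨hs.1, hs1⟩, f.extend_of_mem hs]
  · simp only [Int.fract_one, ← f.extend_of_mem, f.extend_zero, f.extend_one,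
      coe_cactusCoord_one]

end CactusMap

section Estimates

variable {k : ℕ} {x y : CactusPartition k} {f g : MonPlus} {δ : ℝ}

lemma abs_cactusCoord_sub_lt_of_dist_phiMap_lt (hδ : δ ≤ 1 / 2)
    (H : ∀ z j, dist (phiMap y g z j) (phiMap x f z j) < δ) (j : Fin k) {t : ℝ}
    (ht : t ∈ Icc (0 : ℝ) 1) :
    |cactusCoord y j (g.extend t) - cactusCoord x j (f.extend t)| < δ := by
  have hcont : ∀ (w : CactusPartition k) (h : MonPlus),
      ContinuousOn (fun t => cactusCoord w j (h.extend t)) (Icc 0 1) := fun w h =>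
    continuousOn_const.mul ((continuousOn_arcCdf (w.measurableSet_part j)).comp
      h.continuous_extend.continuousOn fun t _ => h.extend_mem t)
  refine abs_lt_of_forall_norm_coe_lt ((hcont y g).sub (hcont x f))
    (by simp [MonPlus.extend_zero, cactusCoord_zero]) hδ (fun s hs => ?_) ht
  simpa [phiMap_coe _ _ _ hs, dist_eq_norm] using H s j

lemma abs_extend_sub_lt_of_dist_phiMap_lt (hδ : δ ≤ 1 / 2)
    (H : ∀ z j, dist (phiMap y g z j) (phiMap x f z j) < δ) {t : ℝ} (ht : t ∈ Icc (0 : ℝ) 1) :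
    |g.extend t - f.extend t| < δ := by
  have hk : (0 : ℝ) < k := Nat.cast_pos.2 x.pos
  have hsum : (k : ℝ) * (g.extend t - f.extend t)
      = ∑ j, (cactusCoord y j (g.extend t) - cactusCoord x j (f.extend t)) := by
    rw [Finset.sum_sub_distrib, sum_cactusCoord y (g.extend_mem t),
      sum_cactusCoord x (f.extend_mem t), mul_sub]
  refine lt_of_mul_lt_mul_left ?_ hk.le
  calc (k : ℝ) * |g.extend t - f.extend t|
      = |∑ j, (cactusCoord y j (g.extend t) - cactusCoord x j (f.extend t))| := by
        rw [← hsum, abs_mul, abs_of_pos hk]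
    _ ≤ ∑ j, |cactusCoord y j (g.extend t) - cactusCoord x j (f.extend t)| :=
        Finset.abs_sum_le_sum_abs _ _
    _ < ∑ _j : Fin k, δ := Finset.sum_lt_sum_of_nonempty ⟨⟨0, x.pos⟩, Finset.mem_univ _⟩
        fun j _ => abs_cactusCoord_sub_lt_of_dist_phiMap_lt hδ H j ht
    _ = k * δ := by simp

lemma abs_arcCdf_sub_le_of_dist_phiMap_lt (hδ : δ ≤ 1 / 2)
    (H : ∀ z j, dist (phiMap y g z j) (phiMap x f z j) < δ) (j : Fin k) {s : ℝ}
    (hs : s ∈ Icc (0 : ℝ) 1) : |arcCdf (x.part j) s - arcCdf (y.part j) s| ≤ 2 * δ := by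
  obtain ⟨t, ht, rfl⟩ := f.surjOn_extend hs
  have hk : (1 : ℝ) ≤ k := Nat.one_le_cast.2 x.pos
  have hcoord := abs_cactusCoord_sub_lt_of_dist_phiMap_lt hδ H j ht
  rw [cactusCoord_eq, cactusCoord_eq, ← mul_sub, abs_mul, Nat.abs_cast] at hcoord
  have hlip := abs_arcCdf_sub_le (y.measurableSet_part j) (f.extend_mem t) (g.extend_mem t)
  have hmon := abs_extend_sub_lt_of_dist_phiMap_lt hδ H ht
  calc |arcCdf (x.part j) (f.extend t) - arcCdf (y.part j) (f.extend t)|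
      ≤ |arcCdf (x.part j) (f.extend t) - arcCdf (y.part j) (g.extend t)|
        + |arcCdf (y.part j) (g.extend t) - arcCdf (y.part j) (f.extend t)| := abs_sub_le _ _ _
    _ ≤ δ + δ := add_le_add ((abs_sub_comm _ _).trans_le
        ((le_mul_of_one_le_left (abs_nonneg _) hk).trans hcoord.le)) (hlip.trans hmon.le)
    _ = 2 * δ := by ring

lemma exists_cactDist_le_of_dist_phiMap_lt (x : CactusPartition k) :
    ∃ C : ℝ, 0 ≤ C ∧ ∀ (y : CactusPartition k) (f g : MonPlus) (δ : ℝ), δ ≤ 1 / 2 →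
      (∀ z j, dist (phiMap y g z j) (phiMap x f z j) < δ) → cactDist x y ≤ C * δ := by
  choose N hN using fun j => (x.arcs' j).exists_volume_diff_le
  refine ⟨8 * ∑ j, (N j : ℝ), by positivity, fun y f g δ hδ H => ?_⟩
  rw [x.cactDist_eq_sum_volume_diff y, Finset.mul_sum, Finset.sum_mul]
  refine Finset.sum_le_sum fun j _ => (hN j _ _ (y.measurableSet_part j)
    fun s hs => abs_arcCdf_sub_le_of_dist_phiMap_lt hδ H j hs).trans_eq (by ring)

lemma dist_phiMap_le (x y : CactusPartition k) {η : ℝ}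
    (hfg : ∀ s, |(g.toFun s : ℝ) - f.toFun s| ≤ η) (z : Circle1) (j : Fin k) :
    dist (phiMap y g z j) (phiMap x f z j) ≤ k * (η + cactDist x y) := by
  obtain ⟨s, hs, rfl⟩ := AddCircle.eq_coe_Ico z
  have hs' : s ∈ Icc (0 : ℝ) 1 := Ico_subset_Icc_self hs
  rw [phiMap_coe _ _ _ hs', phiMap_coe _ _ _ hs']
  refine (dist_coe_le_abs_sub _ _).trans ?_
  rw [cactusCoord_eq, cactusCoord_eq, ← mul_sub, abs_mul, Nat.abs_cast]
  gcongr
  calc |arcCdf (y.part j) (g.extend s) - arcCdf (x.part j) (f.extend s)|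
      ≤ |arcCdf (y.part j) (g.extend s) - arcCdf (y.part j) (f.extend s)|
        + |arcCdf (y.part j) (f.extend s) - arcCdf (x.part j) (f.extend s)| := abs_sub_le _ _ _
    _ ≤ |g.extend s - f.extend s| + cactDist x y := add_le_add
        (abs_arcCdf_sub_le (y.measurableSet_part j) (f.extend_mem s) (g.extend_mem s))
        (x.abs_arcCdf_sub_le_cactDist y j _)
    _ ≤ η + cactDist x y := by
        rw [f.extend_of_mem hs', g.extend_of_mem hs']
        exact add_le_add (hfg _) le_rfl

end Estimates

section Embedding

variable {k : ℕ}

lemma phiMap_continuity_estimate (x : CactusPartition k) (f : MonPlus) {ε : ℝ} (hε : 0 < ε) :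
    ∃ δ > 0, ∀ (y : CactusPartition k) (g : MonPlus), cactDist x y < δ →
      (∀ s, |(g.toFun s : ℝ) - f.toFun s| < δ) →
      ∀ z j, dist (phiMap y g z j) (phiMap x f z j) < ε := by
  have hk : (0 : ℝ) < k := Nat.cast_pos.2 x.pos
  refine ⟨ε / (2 * k), by positivity, fun y g hd hfg z j => ?_⟩
  calc dist (phiMap y g z j) (phiMap x f z j) ≤ k * (ε / (2 * k) + cactDist x y) :=
        dist_phiMap_le x y (fun s => (hfg s).le) z j
    _ < k * (ε / (2 * k) + ε / (2 * k)) := by gcongr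
    _ = ε := by field_simp; ring

lemma phiMap_inverse_continuity_estimate (x : CactusPartition k) (f : MonPlus) {ε : ℝ}
    (hε : 0 < ε) :
    ∃ δ > 0, ∀ (y : CactusPartition k) (g : MonPlus),
      (∀ z j, dist (phiMap y g z j) (phiMap x f z j) < δ) →
      cactDist x y < ε ∧ ∀ s, |(g.toFun s : ℝ) - f.toFun s| < ε := by
  obtain ⟨C, hC, hdist⟩ := exists_cactDist_le_of_dist_phiMap_lt x
  set δ := min (1 / 2) (ε / (C + 1))
  have hδε : δ ≤ ε / (C + 1) := min_le_right _ _
  have hδ : 0 < δ := by positivity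
  refine ⟨δ, hδ, fun y g H => ⟨?_, fun s => ?_⟩⟩
  · calc cactDist x y ≤ C * δ := hdist y f g δ (min_le_left _ _) H
      _ < (C + 1) * δ := by linarith
      _ ≤ ε := (le_div_iff₀' (by linarith)).1 hδε
  · have := abs_extend_sub_lt_of_dist_phiMap_lt (min_le_left _ _) H s.2
    rw [f.extend_of_mem s.2, g.extend_of_mem s.2] at this
    exact this.trans_le (hδε.trans (div_le_self hε.le (by linarith)))

lemma eq_of_phiMap_eq {x y : CactusPartition k} {f g : MonPlus} (h : phiMap x f = phiMap y g) :
    f = g ∧ x = y := by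
  have hclose : ∀ ε > 0, cactDist x y < ε ∧ ∀ s, |(g.toFun s : ℝ) - f.toFun s| < ε :=
    fun ε hε => by
      obtain ⟨δ, hδ, H⟩ := phiMap_inverse_continuity_estimate x f hε
      exact H y g fun z j => by simpa [h] using hδ
  refine ⟨MonPlus.ext_of_coe fun s => ?_, x.eq_of_cactDist_le_zero y ?_⟩
  · refine eq_of_forall_dist_le fun ε hε => ?_
    rw [Real.dist_eq, abs_sub_comm]
    exact ((hclose ε hε).2 s).le
  · exact le_of_forall_pos_lt_add fun ε hε => by simpa using (hclose ε hε).1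

end Embedding

end

theorem phiMap_embedding_general (k : ℕ) :
    Function.Injective (fun p : CactusPartition k × MonPlus => phiMap p.1 p.2) ∧
    (∀ (p : CactusPartition k × MonPlus) (ε : ℝ), 0 < ε →
      ∃ δ > 0, ∀ q : CactusPartition k × MonPlus,
        cactDist p.1 q.1 < δ →
        (∀ s : Set.Icc (0:ℝ) 1, |(q.2.toFun s : ℝ) - (p.2.toFun s : ℝ)| < δ) →
        ∀ (z : Circle1) (j : Fin k), dist (phiMap q.1 q.2 z j) (phiMap p.1 p.2 z j) < ε) ∧
    (∀ (p : CactusPartition k × MonPlus) (ε : ℝ), 0 < ε →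
      ∃ δ > 0, ∀ q : CactusPartition k × MonPlus,
        (∀ (z : Circle1) (j : Fin k), dist (phiMap q.1 q.2 z j) (phiMap p.1 p.2 z j) < δ) →
        cactDist p.1 q.1 < ε ∧
        ∀ s : Set.Icc (0:ℝ) 1, |(q.2.toFun s : ℝ) - (p.2.toFun s : ℝ)| < ε) ∧
    (∀ (x y : CactusPartition k) (f g : MonPlus),
      phiMap x f = phiMap y g → f = g ∧ x = y) := by
  refine ⟨fun p q h => ?_, fun p ε hε => ?_, fun p ε hε => ?_, fun x y f g => eq_of_phiMap_eq⟩
  · obtain ⟨hfg, hxy⟩ := eq_of_phiMap_eq h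
    exact Prod.ext hxy hfg
  · obtain ⟨δ, hδ, H⟩ := phiMap_continuity_estimate p.1 p.2 hε
    exact ⟨δ, hδ, fun q => H q.1 q.2⟩
  · obtain ⟨δ, hδ, H⟩ := phiMap_inverse_continuity_estimate p.1 p.2 hε
    exact ⟨δ, hδ, fun q => H q.1 q.2⟩

/-- the map `φ : MS⁺(k) → CoEnd(S¹)(k)`, `φ(x,f) = c_x ∘ f`, is a
topological embedding (injective; continuous and with continuous inverse onto its
image, expressed in `ε`-`δ` form for the product of the metric `d` on `F(k)` with the
uniform metric on `Mon⁺(I,∂I)`, and the uniform topology on `Map(S¹,(S¹)^k)`).  In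
particular, if `c_x ∘ f = c_y ∘ g` then `f = g` and `x = y`. -/
theorem phiMap_embedding (k : ℕ) (hk : 1 ≤ k) :
    Function.Injective (fun p : CactusPartition k × MonPlus => phiMap p.1 p.2) ∧
    (∀ (p : CactusPartition k × MonPlus) (ε : ℝ), 0 < ε →
      ∃ δ > 0, ∀ q : CactusPartition k × MonPlus,
        cactDist p.1 q.1 < δ →
        (∀ s : Set.Icc (0:ℝ) 1, |(q.2.toFun s : ℝ) - (p.2.toFun s : ℝ)| < δ) →
        ∀ (z : Circle1) (j : Fin k), dist (phiMap q.1 q.2 z j) (phiMap p.1 p.2 z j) < ε) ∧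
    (∀ (p : CactusPartition k × MonPlus) (ε : ℝ), 0 < ε →
      ∃ δ > 0, ∀ q : CactusPartition k × MonPlus,
        (∀ (z : Circle1) (j : Fin k), dist (phiMap q.1 q.2 z j) (phiMap p.1 p.2 z j) < δ) →
        cactDist p.1 q.1 < ε ∧
        ∀ s : Set.Icc (0:ℝ) 1, |(q.2.toFun s : ℝ) - (p.2.toFun s : ℝ)| < ε) ∧
    (∀ (x y : CactusPartition k) (f g : MonPlus),
      phiMap x f = phiMap y g → f = g ∧ x = y) :=
  phiMap_embedding_general k
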